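/- arXiv:2304.12098 — 4 statements merged into one kernel-verified Lean document; each statement's English description precedes it below -/
import Mathlib

section
/- For all positive real numbers a, b, c, d, the function f(t) = -(a·d)·log(t) - (c·b)·log(1-t) on the open interval (0,1) attains a strict unique minimum at t* = σ(log(a/c) - log(b/d)), where σ(t) = 1/(1 + exp(-t)) is the logistic sigmoid; that is, for every t in (0,1) with t ≠ t*, we have f(t*) < f(t). -/
noncomputable def sigmoid (t : ℝ) : ℝ := 1 / (1 + Real.exp (-t))

/-!
The optimum is `s = a d / (a d + c b)`, and the objective is `-(a d + c b)` times the binary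
cross-entropy `s log t + (1 - s) log (1 - t)`. By Gibbs' inequality (`log x < x - 1` for `x ≠ 1`,
applied to `t / s` and `(1 - t) / (1 - s)`) this is uniquely maximised at `t = s`.
-/

open Real hiding sigmoid

lemma sigmoid_log_sub_log {p q : ℝ} (hp : 0 < p) (hq : 0 < q) :
    sigmoid (log p - log q) = p / (p + q) := by
  rw [sigmoid, neg_sub, ← log_div hq.ne' hp.ne', exp_log (div_pos hq hp)]
  field_simp

lemma mul_sub_log_lt_sub {s t : ℝ} (hs : 0 < s) (ht : 0 < t) (hne : t ≠ s) :
    s * (log t - log s) < t - s := by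
  have hlog : log (t / s) < t / s - 1 :=
    log_lt_sub_one_of_pos (div_pos ht hs) (by rwa [ne_eq, div_eq_one_iff_eq hs.ne'])
  calc s * (log t - log s) = s * log (t / s) := by rw [log_div ht.ne' hs.ne']
    _ < s * (t / s - 1) := mul_lt_mul_of_pos_left hlog hs
    _ = t - s := by field_simp

lemma binary_cross_entropy_lt_entropy {s t : ℝ} (hs : s ∈ Set.Ioo (0 : ℝ) 1)
    (ht : t ∈ Set.Ioo (0 : ℝ) 1) (hne : t ≠ s) :
    s * log t + (1 - s) * log (1 - t) < s * log s + (1 - s) * log (1 - s) := by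
  have h₁ := mul_sub_log_lt_sub hs.1 ht.1 hne
  have h₂ := mul_sub_log_lt_sub (sub_pos.2 hs.2) (sub_pos.2 ht.2) (by contrapose! hne; linarith)
  linarith

lemma log_loss_lt_of_ne_div_add {A B t : ℝ} (hA : 0 < A) (hB : 0 < B)
    (ht : t ∈ Set.Ioo (0 : ℝ) 1) (hne : t ≠ A / (A + B)) :
    -A * log (A / (A + B)) - B * log (1 - A / (A + B)) < -A * log t - B * log (1 - t) := by
  set s := A / (A + B) with hs_def
  have hs : s ∈ Set.Ioo (0 : ℝ) 1 := ⟨by positivity, by rw [div_lt_one (by positivity)]; linarith⟩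
  have hAs : A = (A + B) * s := by rw [hs_def]; field_simp
  have hBs : B = (A + B) * (1 - s) := by rw [hs_def]; field_simp; ring
  calc -A * log s - B * log (1 - s)
      = -(A + B) * (s * log s + (1 - s) * log (1 - s)) := by
        linear_combination (-log s) * hAs - log (1 - s) * hBs
    _ < -(A + B) * (s * log t + (1 - s) * log (1 - t)) :=
        mul_lt_mul_of_neg_left (binary_cross_entropy_lt_entropy hs ht hne) (by linarith)
    _ = -A * log t - B * log (1 - t) := by
        linear_combination log t * hAs + log (1 - t) * hBs

theorem scomgan_optimal_discriminator_pointwise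
    (a b c d : ℝ) (ha : 0 < a) (hb : 0 < b) (hc : 0 < c) (hd : 0 < d) :
    ∀ t ∈ Set.Ioo (0 : ℝ) 1,
      t ≠ sigmoid (Real.log (a / c) - Real.log (b / d)) →
      (-(a * d) * Real.log (sigmoid (Real.log (a / c) - Real.log (b / d)))
        - (c * b) * Real.log (1 - sigmoid (Real.log (a / c) - Real.log (b / d))))
        < (-(a * d) * Real.log t - (c * b) * Real.log (1 - t)) := by
  intro t ht hne
  have hsig : sigmoid (log (a / c) - log (b / d)) = a * d / (a * d + c * b) := by
    rw [sigmoid_log_sub_log (div_pos ha hc) (div_pos hb hd)]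
    field_simp
  rw [hsig] at hne ⊢
  exact log_loss_lt_of_ne_div_add (mul_pos ha hd) (mul_pos hc hb) ht hne
end

section
/- For all positive real numbers a, b, c, d, set A = a·d + (1/2)·a·b + (1/2)·c·d and B = c·b + (1/2)·a·b + (1/2)·c·d. Then the function f(t) = -A·log(t) - B·log(1-t) on the open interval (0,1) attains a strict unique minimum at t* = 1/2 + (1/2)·( a/(a+c) - b/(b+d) ); that is, for every t in (0,1) with t ≠ t*, f(t*) < f(t). -/
/-!
The loss `-A log t - B log (1 - t)` exceeds its value at `s = A / (A + B)` by
`(A + B) · KL(s ‖ t)`, which is positive for `t ≠ s` (Gibbs' inequality, here from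
`log x < x - 1` for `x ≠ 1`). For the SComGAN-eq weights, `A + B = (a + c)(b + d)` and
`A - B = ad - bc`, so `s = 1/2 + (A - B) / (2 (A + B))` is `1/2 + (D*(x) - D*(y)) / 2`.
-/

open Real Set

noncomputable def binaryCrossEntropy (A B t : ℝ) : ℝ := -A * log t - B * log (1 - t)

theorem binaryCrossEntropy_lt_of_ne {A B t : ℝ} (hA : 0 < A) (hB : 0 < B)
    (ht : t ∈ Ioo (0 : ℝ) 1) (hne : t ≠ A / (A + B)) :
    binaryCrossEntropy A B (A / (A + B)) < binaryCrossEntropy A B t := by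
  obtain ⟨ht0, ht1⟩ := ht
  have hAB : 0 < A + B := add_pos hA hB
  set s := A / (A + B) with hs
  have hs0 : 0 < s := div_pos hA hAB
  have h1s : 1 - s = B / (A + B) := by rw [hs]; field_simp; ring
  have h1s0 : 0 < 1 - s := h1s ▸ div_pos hB hAB
  have hlog_t : log (t / s) < t / s - 1 :=
    log_lt_sub_one_of_pos (div_pos ht0 hs0) fun h => hne ((div_eq_one_iff_eq hs0.ne').1 h)
  have hlog_1t : log ((1 - t) / (1 - s)) ≤ (1 - t) / (1 - s) - 1 :=
    log_le_sub_one_of_pos (div_pos (by linarith) h1s0)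
  have hlinear_zero : A * (t / s - 1) + B * ((1 - t) / (1 - s) - 1) = 0 := by
    rw [h1s, hs]; field_simp; ring
  rw [log_div ht0.ne' hs0.ne'] at hlog_t
  rw [log_div (by linarith) h1s0.ne'] at hlog_1t
  unfold binaryCrossEntropy
  nlinarith [mul_lt_mul_of_pos_left hlog_t hA, mul_le_mul_of_nonneg_left hlog_1t hB.le]

theorem scomgan_weight_div_total {a b c d : ℝ} (ha : 0 < a) (hb : 0 < b) (hc : 0 < c)
    (hd : 0 < d) :
    (a * d + 1 / 2 * (a * b) + 1 / 2 * (c * d)) /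
        ((a * d + 1 / 2 * (a * b) + 1 / 2 * (c * d)) + (c * b + 1 / 2 * (a * b) + 1 / 2 * (c * d)))
      = 1 / 2 + 1 / 2 * (a / (a + c) - b / (b + d)) := by
  have hac : a + c ≠ 0 := by positivity
  have hbd : b + d ≠ 0 := by positivity
  have htotal : (a * d + 1 / 2 * (a * b) + 1 / 2 * (c * d)) +
      (c * b + 1 / 2 * (a * b) + 1 / 2 * (c * d)) = (a + c) * (b + d) := by ring
  rw [htotal]
  field_simp
  ring

theorem scomgan_eq_optimal_discriminator_pointwise
    (a b c d : ℝ) (ha : 0 < a) (hb : 0 < b) (hc : 0 < c) (hd : 0 < d) :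
    ∀ t ∈ Set.Ioo (0 : ℝ) 1,
      t ≠ 1 / 2 + (1 / 2) * (a / (a + c) - b / (b + d)) →
      (-(a * d + (1 / 2) * (a * b) + (1 / 2) * (c * d))
          * Real.log (1 / 2 + (1 / 2) * (a / (a + c) - b / (b + d)))
        - (c * b + (1 / 2) * (a * b) + (1 / 2) * (c * d))
          * Real.log (1 - (1 / 2 + (1 / 2) * (a / (a + c) - b / (b + d)))))
      < (-(a * d + (1 / 2) * (a * b) + (1 / 2) * (c * d)) * Real.log t
          - (c * b + (1 / 2) * (a * b) + (1 / 2) * (c * d)) * Real.log (1 - t)) := by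
  intro t ht hne
  have hstar := scomgan_weight_div_total ha hb hc hd
  rw [← hstar] at hne ⊢
  exact binaryCrossEntropy_lt_of_ne (by positivity) (by positivity) ht hne
end

section
/- For all positive real numbers a, b, c, d, the function f(t) = (a·d)·(t-1)² + (c·b)·(t+1)² + (a·b)·t² + (c·d)·t² on ℝ attains a strict unique minimum at t* = (1/2)·( (a-c)/(a+c) - (b-d)/(b+d) ); that is, for every t ≠ t*, f(t*) < f(t). -/
/-!
The weights `a d, c b, a b, c d` sum to `(a + c) (b + d)`, so `f` is the weighted least-squares
objective for the targets `1, -1, 0, 0`. Such an objective is its value at the weighted mean plus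
the total weight times the squared distance to the mean, so the mean
`(a d - c b) / ((a + c) (b + d))` is its strict unique minimiser; and this mean is `t*`.
-/

open Finset

namespace Finset

variable {ι : Type*} (s : Finset ι) (w y : ι → ℝ)

theorem sum_mul_sub_sq_eq_sum_mul_centerMass_sub_sq_add (hw : ∑ i ∈ s, w i ≠ 0) (t : ℝ) :
    ∑ i ∈ s, w i * (t - y i) ^ 2
      = ∑ i ∈ s, w i * (s.centerMass w y - y i) ^ 2
        + (∑ i ∈ s, w i) * (t - s.centerMass w y) ^ 2 := by
  set m := s.centerMass w y
  have hcentered : ∑ i ∈ s, w i * (m - y i) = 0 := by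
    simp only [m, centerMass, smul_eq_mul, mul_sub, sum_sub_distrib, ← sum_mul,
      mul_inv_cancel_left₀ hw, sub_self]
  calc ∑ i ∈ s, w i * (t - y i) ^ 2
      = ∑ i ∈ s, (w i * (m - y i) ^ 2 + 2 * (t - m) * (w i * (m - y i)) + w i * (t - m) ^ 2) :=
        sum_congr rfl fun i _ => by ring
    _ = _ := by rw [sum_add_distrib, sum_add_distrib, ← mul_sum, hcentered, ← sum_mul]; ring

theorem sum_mul_centerMass_sub_sq_lt (hw : 0 < ∑ i ∈ s, w i) {t : ℝ} (ht : t ≠ s.centerMass w y) :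
    ∑ i ∈ s, w i * (s.centerMass w y - y i) ^ 2 < ∑ i ∈ s, w i * (t - y i) ^ 2 := by
  rw [sum_mul_sub_sq_eq_sum_mul_centerMass_sub_sq_add s w y hw.ne' t, lt_add_iff_pos_right]
  exact mul_pos hw (sq_pos_of_ne_zero (sub_ne_zero.mpr ht))

end Finset

theorem lscomgan_eq_optimal_discriminator_pointwise
    (a b c d : ℝ) (ha : 0 < a) (hb : 0 < b) (hc : 0 < c) (hd : 0 < d) :
    ∀ t : ℝ, t ≠ (1 / 2) * ((a - c) / (a + c) - (b - d) / (b + d)) →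
      ((a * d) * ((1 / 2) * ((a - c) / (a + c) - (b - d) / (b + d)) - 1) ^ 2
        + (c * b) * ((1 / 2) * ((a - c) / (a + c) - (b - d) / (b + d)) + 1) ^ 2
        + (a * b) * ((1 / 2) * ((a - c) / (a + c) - (b - d) / (b + d))) ^ 2
        + (c * d) * ((1 / 2) * ((a - c) / (a + c) - (b - d) / (b + d))) ^ 2)
      < ((a * d) * (t - 1) ^ 2 + (c * b) * (t + 1) ^ 2 + (a * b) * t ^ 2 + (c * d) * t ^ 2) := by
  intro t ht
  let w : Fin 4 → ℝ := ![a * d, c * b, a * b, c * d]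
  let y : Fin 4 → ℝ := ![1, -1, 0, 0]
  have htotal : ∑ i, w i = (a + c) * (b + d) := by
    simp only [w, Fin.sum_univ_four, Matrix.cons_val]
    ring
  have hmean : univ.centerMass w y = (1 / 2) * ((a - c) / (a + c) - (b - d) / (b + d)) := by
    rw [centerMass, htotal]
    simp only [w, y, Fin.sum_univ_four, Matrix.cons_val, smul_eq_mul]
    field_simp
    ring
  have hlt := sum_mul_centerMass_sub_sq_lt univ w y (htotal ▸ by positivity) (hmean ▸ ht)
  rw [hmean] at hlt
  simpa [w, y, Fin.sum_univ_four] using hlt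
end

section
/- For all positive real numbers a, b, c, d, set A = a·b + (1/2)·a·d + (1/2)·c·b and B = c·d + (1/2)·a·d + (1/2)·c·b. Then the function f(t) = -A·log(t) - B·log(1-t) on the open interval (0,1) attains a strict unique minimum at t* = (1/2)·( a/(a+c) + b/(b+d) ); that is, for every t in (0,1) with t ≠ t*, f(t*) < f(t). -/
open Real

/-- Gibbs' inequality for two outcomes, via `log x < x - 1` for `x ≠ 1` applied to `t / p` and
`(1 - t) / (1 - p)`. -/
lemma binaryCrossEntropy_lt {p t : ℝ} (hp0 : 0 < p) (hp1 : p < 1) (ht0 : 0 < t) (ht1 : t < 1)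
    (hne : t ≠ p) :
    -p * log p - (1 - p) * log (1 - p) < -p * log t - (1 - p) * log (1 - t) := by
  have hq0 : 0 < 1 - p := by linarith
  have hlog_t : log t - log p < t / p - 1 := by
    rw [← log_div ht0.ne' hp0.ne']
    exact log_lt_sub_one_of_pos (div_pos ht0 hp0) (by rwa [ne_eq, div_eq_one_iff_eq hp0.ne'])
  have hlog_1t : log (1 - t) - log (1 - p) ≤ (1 - t) / (1 - p) - 1 := by
    rw [← log_div (by linarith) hq0.ne']
    exact log_le_sub_one_of_pos (div_pos (by linarith) hq0)
  have hp : p * (t / p - 1) = t - p := by field_simp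
  have hq : (1 - p) * ((1 - t) / (1 - p) - 1) = p - t := by field_simp; ring
  nlinarith [mul_lt_mul_of_pos_left hlog_t hp0, mul_le_mul_of_nonneg_left hlog_1t hq0.le]

lemma weightedCrossEntropy_lt {A B t : ℝ} (hA : 0 < A) (hB : 0 < B) (ht0 : 0 < t) (ht1 : t < 1)
    (hne : t ≠ A / (A + B)) :
    -A * log (A / (A + B)) - B * log (1 - A / (A + B)) < -A * log t - B * log (1 - t) := by
  have hAB : 0 < A + B := by linarith
  have hA_eq : A = (A + B) * (A / (A + B)) := by field_simp
  have hB_eq : B = (A + B) * (1 - A / (A + B)) := by field_simp; ring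
  set p := A / (A + B)
  have hp1 : p < 1 := (div_lt_one hAB).mpr (by linarith)
  have key := mul_lt_mul_of_pos_left (binaryCrossEntropy_lt (div_pos hA hAB) hp1 ht0 ht1 hne) hAB
  linear_combination key + (log t - log p) * hA_eq + (log (1 - t) - log (1 - p)) * hB_eq

lemma half_add_div_eq_div {a b c d : ℝ} (hac : a + c ≠ 0) (hbd : b + d ≠ 0) :
    (1 / 2) * (a / (a + c) + b / (b + d)) =
      (a * b + (1 / 2) * (a * d) + (1 / 2) * (c * b)) /
        ((a * b + (1 / 2) * (a * d) + (1 / 2) * (c * b)) +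
          (c * d + (1 / 2) * (a * d) + (1 / 2) * (c * b))) := by
  have hsum : (a * b + (1 / 2) * (a * d) + (1 / 2) * (c * b)) +
      (c * d + (1 / 2) * (a * d) + (1 / 2) * (c * b)) = (a + c) * (b + d) := by ring
  rw [hsum]
  field_simp
  ring

theorem spacgan_rf_optimal_discriminator_pointwise
    (a b c d : ℝ) (ha : 0 < a) (hb : 0 < b) (hc : 0 < c) (hd : 0 < d) :
    ∀ t ∈ Set.Ioo (0 : ℝ) 1,
      t ≠ (1 / 2) * (a / (a + c) + b / (b + d)) →
      (-(a * b + (1 / 2) * (a * d) + (1 / 2) * (c * b))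
          * Real.log ((1 / 2) * (a / (a + c) + b / (b + d)))
        - (c * d + (1 / 2) * (a * d) + (1 / 2) * (c * b))
          * Real.log (1 - (1 / 2) * (a / (a + c) + b / (b + d))))
      < (-(a * b + (1 / 2) * (a * d) + (1 / 2) * (c * b)) * Real.log t
          - (c * d + (1 / 2) * (a * d) + (1 / 2) * (c * b)) * Real.log (1 - t)) := by
  rintro t ⟨ht0, ht1⟩ hne
  rw [half_add_div_eq_div (by positivity) (by positivity)] at hne ⊢
  exact weightedCrossEntropy_lt (by positivity) (by positivity) ht0 ht1 hne
end
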